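/- Let R be a ring, M a right R-module, and W = End_R(M). (1) For every anti-endomorphism α of W and every inner automorphism φ of W, the double R-modules K_α and K_{φ∘α} are isomorphic. (2) Conversely, if α and β are anti-endomorphisms of W such that b_α and b_β are both right regular and K_α ≅ K_β as double R-modules, then β = φ ∘ α for some inner automorphism φ of W. -/

import Mathlib

/-!
If `b_α` and `b_β` are right regular, an isomorphism `f : K_α ≅ K_β` is transported to `M`:
regularity of `b_β` writes `y ↦ f (b_α(y, x))` as `b_β(·, σ x)` for a unique `σ x`, which makes
`σ` an `R`-linear map, invertible with inverse obtained in the same way from `f⁻¹`. Adjointness of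
`α` and `β` then gives `σ α(w) = β(w) σ`, i.e. `β` is `α` followed by conjugation by `σ`.
Conversely, a unit `u` of `End_R(M)` with `u α(w) = β(w) u` maps the relations of `K_α` onto those
of `K_β`, so `x ⊗ y ↦ x ⊗ u y` descends to an isomorphism `K_α ≅ K_β`.
-/

open MulOpposite TensorProduct Function

universe u v w v'

section Core

/-- An anti-endomorphism of a ring: additive, unital, reverses multiplication. -/
def IsAntiEndo {W : Type*} [Ring W] (α : W → W) : Prop :=
  (∀ u v : W, α (u + v) = α u + α v) ∧ α 1 = 1 ∧ ∀ u v : W, α (u * v) = α v * α u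

/-- An anti-automorphism of a ring: a bijective anti-endomorphism. -/
def IsAntiAuto {W : Type*} [Ring W] (α : W → W) : Prop :=
  IsAntiEndo α ∧ Function.Bijective α

/-- An inner automorphism of a ring: conjugation by a unit. -/
def IsInnerAut {W : Type*} [Ring W] (φ : W → W) : Prop :=
  ∃ u : Wˣ, ∀ w : W, φ w = ↑u * w * ↑u⁻¹

variable (R : Type u) [Ring R]

/-- A double `R`-module structure on the additive group `K`: two commuting
right `R`-module structures `m0` and `m1`. -/
structure DoubleModule (K : Type v) [AddCommGroup K] where
  m0 : K → R → K
  m1 : K → R → K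
  m0_add_left : ∀ (k k' : K) (r : R), m0 (k + k') r = m0 k r + m0 k' r
  m0_add_right : ∀ (k : K) (r r' : R), m0 k (r + r') = m0 k r + m0 k r'
  m0_mul : ∀ (k : K) (r r' : R), m0 k (r * r') = m0 (m0 k r) r'
  m0_one : ∀ k : K, m0 k 1 = k
  m1_add_left : ∀ (k k' : K) (r : R), m1 (k + k') r = m1 k r + m1 k' r
  m1_add_right : ∀ (k : K) (r r' : R), m1 k (r + r') = m1 k r + m1 k r'
  m1_mul : ∀ (k : K) (r r' : R), m1 k (r * r') = m1 (m1 k r) r'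
  m1_one : ∀ k : K, m1 k 1 = k
  comm : ∀ (k : K) (a b : R), m1 (m0 k a) b = m0 (m1 k b) a

variable {R}

/-- A homomorphism of double `R`-modules. -/
def IsDoubleHom {K : Type v} {K' : Type w} [AddCommGroup K] [AddCommGroup K']
    (DK : DoubleModule R K) (DK' : DoubleModule R K') (f : K → K') : Prop :=
  (∀ k k' : K, f (k + k') = f k + f k') ∧
  (∀ (k : K) (r : R), f (DK.m0 k r) = DK'.m0 (f k) r) ∧
  (∀ (k : K) (r : R), f (DK.m1 k r) = DK'.m1 (f k) r)

/-- An isomorphism of double `R`-modules. -/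
def IsDoubleIso {K : Type v} {K' : Type w} [AddCommGroup K] [AddCommGroup K']
    (DK : DoubleModule R K) (DK' : DoubleModule R K') (f : K → K') : Prop :=
  IsDoubleHom DK DK' f ∧ Function.Bijective f

/-- An anti-automorphism of a double `R`-module: an additive bijection exchanging
the two module structures. -/
def IsDoubleAntiAuto {K : Type v} [AddCommGroup K] (DK : DoubleModule R K) (θ : K → K) : Prop :=
  Function.Bijective θ ∧ (∀ k k' : K, θ (k + k') = θ k + θ k') ∧
  (∀ (k : K) (r : R), θ (DK.m0 k r) = DK.m1 (θ k) r) ∧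
  (∀ (k : K) (r : R), θ (DK.m1 k r) = DK.m0 (θ k) r)

variable (R)

/-- A general bilinear form on a right `R`-module `M` (encoded as a module over `Rᵐᵒᵖ`)
with values in a double `R`-module `(K, DK)`. -/
structure GBF (M : Type v) [AddCommGroup M] [Module Rᵐᵒᵖ M]
    (K : Type w) [AddCommGroup K] (DK : DoubleModule R K) where
  b : M → M → K
  add_left : ∀ x x' y : M, b (x + x') y = b x y + b x' y
  add_right : ∀ x y y' : M, b x (y + y') = b x y + b x y'
  smul_left : ∀ (x y : M) (r : R), b (op r • x) y = DK.m0 (b x y) r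
  smul_right : ∀ (x y : M) (r : R), b x (op r • y) = DK.m1 (b x y) r

variable {R}

namespace GBF

variable {M : Type v} [AddCommGroup M] [Module Rᵐᵒᵖ M]
  {K : Type w} [AddCommGroup K] {DK : DoubleModule R K}

/-- The right adjoint of `β` is injective. -/
def RightInjective (β : GBF R M K DK) : Prop :=
  ∀ x x' : M, (∀ y : M, β.b y x = β.b y x') → x = x'

/-- The right adjoint of `β` is bijective onto `Hom_R(M, K₀)`. -/
def RightRegular (β : GBF R M K DK) : Prop :=
  β.RightInjective ∧
  ∀ f : M → K, (∀ y y' : M, f (y + y') = f y + f y') →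
    (∀ (y : M) (r : R), f (op r • y) = DK.m0 (f y) r) →
    ∃ x : M, ∀ y : M, f y = β.b y x

/-- The left adjoint of `β` is injective. -/
def LeftInjective (β : GBF R M K DK) : Prop :=
  ∀ x x' : M, (∀ y : M, β.b x y = β.b x' y) → x = x'

/-- The left adjoint of `β` is bijective onto `Hom_R(M, K₁)`. -/
def LeftRegular (β : GBF R M K DK) : Prop :=
  β.LeftInjective ∧
  ∀ f : M → K, (∀ y y' : M, f (y + y') = f y + f y') →
    (∀ (y : M) (r : R), f (op r • y) = DK.m1 (f y) r) →
    ∃ x : M, ∀ y : M, f y = β.b x y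

/-- `α` is an adjoint anti-endomorphism for `β`: `β(w x, y) = β(x, α(w) y)`. -/
def IsAdjoint (β : GBF R M K DK) (α : Module.End Rᵐᵒᵖ M → Module.End Rᵐᵒᵖ M) : Prop :=
  ∀ (w : Module.End Rᵐᵒᵖ M) (x y : M), β.b (w x) y = β.b x (α w y)

/-- Similarity of general bilinear forms on the same module. -/
def Similar {K' : Type v'} [AddCommGroup K'] {DK' : DoubleModule R K'}
    (β : GBF R M K DK) (β' : GBF R M K' DK') : Prop :=
  ∃ f : K → K', IsDoubleIso DK DK' f ∧ ∀ x y : M, β'.b x y = f (β.b x y)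

end GBF

section Kalpha

variable {M : Type v} [AddCommGroup M] [Module Rᵐᵒᵖ M]

/-- The subgroup of `M ⊗_ℤ M` generated by the elements `(w x) ⊗ y - x ⊗ (α w y)`. -/
def kalphaRel (α : Module.End Rᵐᵒᵖ M → Module.End Rᵐᵒᵖ M) : Submodule ℤ (M ⊗[ℤ] M) :=
  Submodule.span ℤ
    {z | ∃ (w : Module.End Rᵐᵒᵖ M) (x y : M), z = (w x) ⊗ₜ[ℤ] y - x ⊗ₜ[ℤ] (α w y)}

/-- `K_α`, the quotient of `M ⊗_ℤ M` by the relations `(w x) ⊗ y = x ⊗ (α w y)`. -/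
abbrev Kalpha (α : Module.End Rᵐᵒᵖ M → Module.End Rᵐᵒᵖ M) : Type _ :=
  (M ⊗[ℤ] M) ⧸ kalphaRel α

/-- The map `x ⊗ y ↦ (x·r) ⊗ y` on `M ⊗_ℤ M`. -/
noncomputable def smulLeftMap (r : R) : (M ⊗[ℤ] M) →ₗ[ℤ] (M ⊗[ℤ] M) :=
  TensorProduct.map ((DistribMulAction.toAddMonoidHom M (op r : Rᵐᵒᵖ)).toIntLinearMap)
    LinearMap.id

/-- The map `x ⊗ y ↦ x ⊗ (y·r)` on `M ⊗_ℤ M`. -/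
noncomputable def smulRightMap (r : R) : (M ⊗[ℤ] M) →ₗ[ℤ] (M ⊗[ℤ] M) :=
  TensorProduct.map LinearMap.id
    ((DistribMulAction.toAddMonoidHom M (op r : Rᵐᵒᵖ)).toIntLinearMap)

theorem kalphaRel_le_left (α : Module.End Rᵐᵒᵖ M → Module.End Rᵐᵒᵖ M) (r : R) :
    kalphaRel α ≤ (kalphaRel α).comap (smulLeftMap (M := M) r) := by
  rw [kalphaRel, Submodule.span_le]
  rintro _ ⟨w, x, y, rfl⟩
  rw [SetLike.mem_coe, Submodule.mem_comap, map_sub]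
  have h1 : smulLeftMap (M := M) r ((w x) ⊗ₜ[ℤ] y) = (w (op r • x)) ⊗ₜ[ℤ] y := by
    exact (TensorProduct.map_tmul _ _ _ _).trans (by simp [map_smul])
  have h2 : smulLeftMap (M := M) r (x ⊗ₜ[ℤ] (α w y)) = (op r • x) ⊗ₜ[ℤ] (α w y) := by
    exact (TensorProduct.map_tmul _ _ _ _).trans (by simp)
  rw [h1, h2]
  exact Submodule.subset_span ⟨w, op r • x, y, rfl⟩

theorem kalphaRel_le_right (α : Module.End Rᵐᵒᵖ M → Module.End Rᵐᵒᵖ M) (r : R) :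
    kalphaRel α ≤ (kalphaRel α).comap (smulRightMap (M := M) r) := by
  rw [kalphaRel, Submodule.span_le]
  rintro _ ⟨w, x, y, rfl⟩
  rw [SetLike.mem_coe, Submodule.mem_comap, map_sub]
  have h1 : smulRightMap (M := M) r ((w x) ⊗ₜ[ℤ] y) = (w x) ⊗ₜ[ℤ] (op r • y) := by
    exact (TensorProduct.map_tmul _ _ _ _).trans (by simp)
  have h2 : smulRightMap (M := M) r (x ⊗ₜ[ℤ] (α w y)) = x ⊗ₜ[ℤ] (α w (op r • y)) := by
    exact (TensorProduct.map_tmul _ _ _ _).trans (by simp [map_smul])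
  rw [h1, h2]
  exact Submodule.subset_span ⟨w, x, op r • y, rfl⟩

/-- The `m0`-action on `K_α`. -/
noncomputable def kSmul0 (α : Module.End Rᵐᵒᵖ M → Module.End Rᵐᵒᵖ M) (r : R) :
    Kalpha α →ₗ[ℤ] Kalpha α :=
  Submodule.mapQ _ _ (smulLeftMap r) (kalphaRel_le_left α r)

/-- The `m1`-action on `K_α`. -/
noncomputable def kSmul1 (α : Module.End Rᵐᵒᵖ M → Module.End Rᵐᵒᵖ M) (r : R) :
    Kalpha α →ₗ[ℤ] Kalpha α :=
  Submodule.mapQ _ _ (smulRightMap r) (kalphaRel_le_right α r)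

theorem kSmul0_mk (α : Module.End Rᵐᵒᵖ M → Module.End Rᵐᵒᵖ M) (r : R) (t : M ⊗[ℤ] M) :
    kSmul0 α r (Submodule.Quotient.mk t) = Submodule.Quotient.mk (smulLeftMap r t) := rfl

theorem kSmul1_mk (α : Module.End Rᵐᵒᵖ M → Module.End Rᵐᵒᵖ M) (r : R) (t : M ⊗[ℤ] M) :
    kSmul1 α r (Submodule.Quotient.mk t) = Submodule.Quotient.mk (smulRightMap r t) := rfl

/-- The double `R`-module structure on `K_α`. -/
noncomputable def KalphaDM (α : Module.End Rᵐᵒᵖ M → Module.End Rᵐᵒᵖ M) :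
    DoubleModule R (Kalpha α) where
  m0 k r := kSmul0 α r k
  m1 k r := kSmul1 α r k
  m0_add_left k k' r := map_add _ k k'
  m0_add_right := by
    intro k r r'
    try dsimp only
    induction k using Submodule.Quotient.induction_on with
    | _ t =>
      rw [kSmul0_mk, kSmul0_mk, kSmul0_mk, ← Submodule.Quotient.mk_add]
      congr 1
      induction t with
      | zero => simp
      | tmul x y => (repeat erw [TensorProduct.map_tmul]); simp [smulLeftMap, op_add, add_smul, TensorProduct.add_tmul]
      | add a b ha hb => rw [map_add, map_add, map_add, ha, hb]; abel
  m0_mul := by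
    intro k r r'
    try dsimp only
    induction k using Submodule.Quotient.induction_on with
    | _ t =>
      rw [kSmul0_mk, kSmul0_mk, kSmul0_mk]
      congr 1
      induction t with
      | zero => simp
      | tmul x y => (repeat erw [TensorProduct.map_tmul]); simp [smulLeftMap, op_mul, mul_smul]
      | add a b ha hb => rw [map_add, map_add, map_add, ha, hb]
  m0_one := by
    intro k
    try dsimp only
    induction k using Submodule.Quotient.induction_on with
    | _ t =>
      rw [kSmul0_mk]
      congr 1
      induction t with
      | zero => simp
      | tmul x y => (repeat erw [TensorProduct.map_tmul]); simp [smulLeftMap]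
      | add a b ha hb => rw [map_add, ha, hb]
  m1_add_left k k' r := map_add _ k k'
  m1_add_right := by
    intro k r r'
    try dsimp only
    induction k using Submodule.Quotient.induction_on with
    | _ t =>
      rw [kSmul1_mk, kSmul1_mk, kSmul1_mk, ← Submodule.Quotient.mk_add]
      congr 1
      induction t with
      | zero => simp
      | tmul x y => (repeat erw [TensorProduct.map_tmul]); simp [smulRightMap, op_add, add_smul, TensorProduct.tmul_add]
      | add a b ha hb => rw [map_add, map_add, map_add, ha, hb]; abel
  m1_mul := by
    intro k r r'
    try dsimp only
    induction k using Submodule.Quotient.induction_on with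
    | _ t =>
      rw [kSmul1_mk, kSmul1_mk, kSmul1_mk]
      congr 1
      induction t with
      | zero => simp
      | tmul x y => (repeat erw [TensorProduct.map_tmul]); simp [smulRightMap, op_mul, mul_smul]
      | add a b ha hb => rw [map_add, map_add, map_add, ha, hb]
  m1_one := by
    intro k
    try dsimp only
    induction k using Submodule.Quotient.induction_on with
    | _ t =>
      rw [kSmul1_mk]
      congr 1
      induction t with
      | zero => simp
      | tmul x y => (repeat erw [TensorProduct.map_tmul]); simp [smulRightMap]
      | add a b ha hb => rw [map_add, ha, hb]
  comm := by
    intro k a c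
    try dsimp only
    induction k using Submodule.Quotient.induction_on with
    | _ t =>
      rw [kSmul0_mk, kSmul1_mk, kSmul1_mk, kSmul0_mk]
      congr 1
      induction t with
      | zero => simp
      | tmul x y => (repeat erw [TensorProduct.map_tmul]); try simp [smulLeftMap, smulRightMap]
      | add p q hp hq => rw [map_add, map_add, map_add, map_add, hp, hq]

/-- The universal general bilinear form `b_α : M × M → K_α`. -/
noncomputable def balpha (α : Module.End Rᵐᵒᵖ M → Module.End Rᵐᵒᵖ M) :
    GBF R M (Kalpha α) (KalphaDM α) where
  b x y := Submodule.Quotient.mk (x ⊗ₜ[ℤ] y)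
  add_left x x' y := by
    try dsimp only
    rw [TensorProduct.add_tmul, Submodule.Quotient.mk_add]
  add_right x y y' := by
    try dsimp only
    rw [TensorProduct.tmul_add, Submodule.Quotient.mk_add]
  smul_left x y r := by
    show _ = kSmul0 α r (Submodule.Quotient.mk (x ⊗ₜ[ℤ] y))
    rw [kSmul0_mk]
    congr 1
  smul_right x y r := by
    show _ = kSmul1 α r (Submodule.Quotient.mk (x ⊗ₜ[ℤ] y))
    rw [kSmul1_mk]
    congr 1

end Kalpha

end Core

section Kalpha

variable {R : Type u} [Ring R] {M : Type v} [AddCommGroup M] [Module Rᵐᵒᵖ M]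

theorem balpha_isAdjoint (α : Module.End Rᵐᵒᵖ M → Module.End Rᵐᵒᵖ M) :
    (balpha (R := R) α).IsAdjoint α := fun w x y =>
  (Submodule.Quotient.eq _).2 (Submodule.subset_span ⟨w, x, y, rfl⟩)

variable {α β : Module.End Rᵐᵒᵖ M → Module.End Rᵐᵒᵖ M}

noncomputable def tensorEquivRight (u : (Module.End Rᵐᵒᵖ M)ˣ) : (M ⊗[ℤ] M) ≃ₗ[ℤ] (M ⊗[ℤ] M) :=
  TensorProduct.congr (LinearEquiv.refl ℤ M)
    (LinearMap.GeneralLinearGroup.toLinearEquiv u).toAddEquiv.toIntLinearEquiv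

theorem tensorEquivRight_tmul (u : (Module.End Rᵐᵒᵖ M)ˣ) (x y : M) :
    tensorEquivRight u (x ⊗ₜ y) = x ⊗ₜ (u : Module.End Rᵐᵒᵖ M) y := rfl

theorem tensorEquivRight_smulLeftMap (u : (Module.End Rᵐᵒᵖ M)ˣ) (r : R) (t : M ⊗[ℤ] M) :
    tensorEquivRight u (smulLeftMap r t) = smulLeftMap r (tensorEquivRight u t) := by
  induction t with
  | zero => simp only [map_zero]
  | tmul x y => rfl
  | add t t' ht ht' => simp only [map_add, ht, ht']

theorem tensorEquivRight_smulRightMap (u : (Module.End Rᵐᵒᵖ M)ˣ) (r : R) (t : M ⊗[ℤ] M) :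
    tensorEquivRight u (smulRightMap r t) = smulRightMap r (tensorEquivRight u t) := by
  induction t with
  | zero => simp only [map_zero]
  | tmul x y => exact congrArg (x ⊗ₜ ·) (map_smul (u : Module.End Rᵐᵒᵖ M) (op r) y)
  | add t t' ht ht' => simp only [map_add, ht, ht']

theorem kalphaRel_le_comap {u : (Module.End Rᵐᵒᵖ M)ˣ} (hu : ∀ w, ↑u * α w = β w * ↑u) :
    kalphaRel α ≤ (kalphaRel β).comap (tensorEquivRight u).toLinearMap := by
  rw [kalphaRel, Submodule.span_le]
  rintro _ ⟨w, x, y, rfl⟩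
  have hy : (u : Module.End Rᵐᵒᵖ M) (α w y) = β w ((u : Module.End Rᵐᵒᵖ M) y) :=
    LinearMap.congr_fun (hu w) y
  rw [SetLike.mem_coe, Submodule.mem_comap, map_sub]
  simp only [LinearEquiv.coe_coe, tensorEquivRight_tmul, hy]
  exact Submodule.subset_span ⟨w, x, (u : Module.End Rᵐᵒᵖ M) y, rfl⟩

noncomputable def kalphaEquiv (u : (Module.End Rᵐᵒᵖ M)ˣ) (hu : ∀ w, ↑u * α w = β w * ↑u) :
    Kalpha α ≃ₗ[ℤ] Kalpha β :=
  Submodule.Quotient.equiv _ _ (tensorEquivRight u) <| by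
    refine le_antisymm (Submodule.map_le_iff_le_comap.2 (kalphaRel_le_comap hu)) ?_
    rw [Submodule.map_equiv_eq_comap_symm]
    refine kalphaRel_le_comap (u := u⁻¹) fun w => ?_
    rw [Units.inv_mul_eq_iff_eq_mul, ← mul_assoc, hu, mul_assoc, Units.mul_inv, mul_one]

theorem isDoubleIso_kalphaEquiv (u : (Module.End Rᵐᵒᵖ M)ˣ) (hu : ∀ w, ↑u * α w = β w * ↑u) :
    IsDoubleIso (KalphaDM α) (KalphaDM β) (kalphaEquiv u hu) := by
  refine ⟨⟨map_add _, fun k r => ?_, fun k r => ?_⟩, (kalphaEquiv u hu).bijective⟩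
  · induction k using Submodule.Quotient.induction_on with
    | _ t => exact congrArg Submodule.Quotient.mk (tensorEquivRight_smulLeftMap u r t)
  · induction k using Submodule.Quotient.induction_on with
    | _ t => exact congrArg Submodule.Quotient.mk (tensorEquivRight_smulRightMap u r t)

end Kalpha

theorem IsDoubleIso.symm {R : Type u} [Ring R] {K : Type v} {K' : Type w} [AddCommGroup K]
    [AddCommGroup K'] {DK : DoubleModule R K} {DK' : DoubleModule R K'} {f : K → K'}
    (hf : IsDoubleIso DK DK' f) : IsDoubleIso DK' DK (Equiv.ofBijective f hf.2).symm := by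
  obtain ⟨⟨hadd, hm0, hm1⟩, hbij⟩ := hf
  set e := Equiv.ofBijective f hbij
  have he : ∀ k, f (e.symm k) = k := e.apply_symm_apply
  refine ⟨⟨fun k k' => ?_, fun k r => ?_, fun k r => ?_⟩, e.symm.bijective⟩ <;> apply hbij.1
  · rw [he, hadd, he, he]
  · rw [he, hm0, he]
  · rw [he, hm1, he]

namespace GBF

variable {R : Type u} [Ring R] {M : Type v} [AddCommGroup M] [Module Rᵐᵒᵖ M]
  {K : Type w} [AddCommGroup K] {DK : DoubleModule R K}
  {K' : Type v'} [AddCommGroup K'] {DK' : DoubleModule R K'}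
  {β : GBF R M K DK} {β' : GBF R M K' DK'}

theorem RightRegular.exists_end_of_isDoubleHom (hβ' : β'.RightRegular) {f : K → K'}
    (hf : IsDoubleHom DK DK' f) :
    ∃ σ : Module.End Rᵐᵒᵖ M, ∀ x y : M, f (β.b y x) = β'.b y (σ x) := by
  obtain ⟨hadd, hm0, hm1⟩ := hf
  have hex : ∀ x, ∃ z, ∀ y, f (β.b y x) = β'.b y z := fun x =>
    hβ'.2 (fun y => f (β.b y x)) (fun y y' => by rw [β.add_left, hadd])
      (fun y r => by rw [β.smul_left, hm0])
  choose σ hσ using hex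
  refine ⟨{ toFun := σ
            map_add' := fun x x' => hβ'.1 _ _ fun y => ?_
            map_smul' := fun c x => hβ'.1 _ _ fun y => ?_ }, hσ⟩
  · rw [← hσ, β.add_right, hadd, hσ, hσ, β'.add_right]
  · rw [RingHom.id_apply, ← op_unop c, ← hσ, β.smul_right, hm1, hσ, β'.smul_right]

theorem IsAdjoint.mul_eq_mul {α α' : Module.End Rᵐᵒᵖ M → Module.End Rᵐᵒᵖ M}
    (hα : β.IsAdjoint α) (hα' : β'.IsAdjoint α') (hβ' : β'.RightInjective) {f : K → K'}
    {σ : Module.End Rᵐᵒᵖ M} (hσ : ∀ x y : M, f (β.b y x) = β'.b y (σ x))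
    (w : Module.End Rᵐᵒᵖ M) : σ * α w = α' w * σ :=
  LinearMap.ext fun x => hβ' _ _ fun y => by
    rw [Module.End.mul_apply, ← hσ, ← hα, hσ, hα', Module.End.mul_apply]

end GBF

theorem exists_unit_mul_eq_mul_of_isDoubleIso {R : Type u} [Ring R] {M : Type v}
    [AddCommGroup M] [Module Rᵐᵒᵖ M] {α β : Module.End Rᵐᵒᵖ M → Module.End Rᵐᵒᵖ M}
    (hα : (balpha (R := R) α).RightRegular) (hβ : (balpha (R := R) β).RightRegular)
    {f : Kalpha α → Kalpha β} (hf : IsDoubleIso (KalphaDM α) (KalphaDM β) f) :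
    ∃ u : (Module.End Rᵐᵒᵖ M)ˣ, ∀ w, ↑u * α w = β w * ↑u := by
  obtain ⟨σ, hσ⟩ := hβ.exists_end_of_isDoubleHom hf.1
  obtain ⟨τ, hτ⟩ := hα.exists_end_of_isDoubleHom hf.symm.1
  have hfτ : ∀ x y, f ((balpha α).b y (τ x)) = (balpha β).b y x := fun x y => by
    rw [← hτ]; exact (Equiv.ofBijective f hf.2).apply_symm_apply _
  have hστ : σ * τ = 1 := LinearMap.ext fun x => hβ.1 _ _ fun y => by
    rw [Module.End.mul_apply, ← hσ, hfτ, Module.End.one_apply]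
  have hτσ : τ * σ = 1 := LinearMap.ext fun x => hα.1 _ _ fun y => hf.2.1 <| by
    rw [Module.End.mul_apply, hfτ, ← hσ, Module.End.one_apply]
  exact ⟨⟨σ, τ, hστ, hτσ⟩,
    (balpha_isAdjoint α).mul_eq_mul (balpha_isAdjoint β) hβ.1 hσ⟩

theorem stmt_2_general {R : Type u} [Ring R] {M : Type v} [AddCommGroup M] [Module Rᵐᵒᵖ M]
    (α : Module.End Rᵐᵒᵖ M → Module.End Rᵐᵒᵖ M) :
    (∀ φ : Module.End Rᵐᵒᵖ M → Module.End Rᵐᵒᵖ M, IsInnerAut φ →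
      ∃ f : Kalpha (M := M) α → Kalpha (M := M) (φ ∘ α),
        IsDoubleIso (KalphaDM α) (KalphaDM (φ ∘ α)) f) ∧
    (∀ β : Module.End Rᵐᵒᵖ M → Module.End Rᵐᵒᵖ M, IsAntiEndo β →
      (balpha α).RightRegular → (balpha β).RightRegular →
      (∃ f : Kalpha (M := M) α → Kalpha (M := M) β,
        IsDoubleIso (KalphaDM α) (KalphaDM β) f) →
      ∃ φ : Module.End Rᵐᵒᵖ M → Module.End Rᵐᵒᵖ M, IsInnerAut φ ∧ β = φ ∘ α) := by
  refine ⟨fun φ ⟨u, hu⟩ => ⟨_, isDoubleIso_kalphaEquiv u fun w => ?_⟩,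
    fun β _ hα hβ ⟨f, hf⟩ => ?_⟩
  · rw [comp_apply, hu, Units.inv_mul_cancel_right]
  · obtain ⟨u, hu⟩ := exists_unit_mul_eq_mul_of_isDoubleIso hα hβ hf
    refine ⟨fun w => ↑u * w * ↑u⁻¹, ⟨u, fun _ => rfl⟩, funext fun w => ?_⟩
    rw [comp_apply, hu, Units.mul_inv_cancel_right]

/-- For an anti-endomorphism `α` of `W = End_R(M)` and an inner automorphism
`φ` of `W`, `K_α ≅ K_{φ∘α}` as double `R`-modules; conversely, if `b_α` and `b_β` are right
regular and `K_α ≅ K_β`, then `β = φ ∘ α` for some inner automorphism `φ`. -/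
theorem stmt_2 {R : Type u} [Ring R] {M : Type v} [AddCommGroup M] [Module Rᵐᵒᵖ M]
    (α : Module.End Rᵐᵒᵖ M → Module.End Rᵐᵒᵖ M) (hα : IsAntiEndo α) :
    (∀ φ : Module.End Rᵐᵒᵖ M → Module.End Rᵐᵒᵖ M, IsInnerAut φ →
      ∃ f : Kalpha (M := M) α → Kalpha (M := M) (φ ∘ α),
        IsDoubleIso (KalphaDM α) (KalphaDM (φ ∘ α)) f) ∧
    (∀ β : Module.End Rᵐᵒᵖ M → Module.End Rᵐᵒᵖ M, IsAntiEndo β →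
      (balpha α).RightRegular → (balpha β).RightRegular →
      (∃ f : Kalpha (M := M) α → Kalpha (M := M) β,
        IsDoubleIso (KalphaDM α) (KalphaDM β) f) →
      ∃ φ : Module.End Rᵐᵒᵖ M → Module.End Rᵐᵒᵖ M, IsInnerAut φ ∧ β = φ ∘ α) :=
  stmt_2_general α
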